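/- Every additive subgroup G of ℚ containing 1 is equal to G(n) for some sequence n : ℕ → ℕ+ of positive integers, i.e., there exists a sequence of positive integers n_i such that G = { p/q ∈ ℚ : q = ∏_{i=1}^k n_i for some k ≥ 0 }. -/

import Mathlib

/-! Enumerate `G = {g₀, g₁, …}` and let `P k` be the lcm of the denominators of `g₀, …, g_{k-1}`.
Bézout shows that `1 / P k ∈ G`, so `G` consists exactly of the fractions `p / P k`; since
`P k ∣ P (k + 1)`, these denominators are the partial products of `n k = P (k + 1) / P k`. -/

/-- For a sequence `n : ℕ → ℕ+`, `GSet n` is the set of rationals expressible as a fraction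
`p / q` (not necessarily in lowest terms) whose denominator is a product of an initial
segment of the sequence: `q = ∏_{i<k} n i` for some `k ≥ 0` (the empty product being `1`). -/
def GSet (n : ℕ → ℕ+) : Set ℚ :=
  {x | ∃ (p : ℤ) (k : ℕ), x = (p : ℚ) / ∏ i ∈ Finset.range k, ((n i : ℕ) : ℚ)}

open Finset

namespace AddSubgroup

theorem gcd_zsmul_mem {M : Type*} [AddGroup M] (G : AddSubgroup M) {x : M} {m k : ℤ}
    (hm : m • x ∈ G) (hk : k • x ∈ G) : (m.gcd k : ℤ) • x ∈ G := by
  rw [Int.gcd_eq_gcd_ab, add_zsmul, mul_comm m, mul_comm k, mul_zsmul, mul_zsmul]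
  exact G.add_mem (G.zsmul_mem hm _) (G.zsmul_mem hk _)

theorem inv_den_mem (G : AddSubgroup ℚ) (h1 : (1 : ℚ) ∈ G) {x : ℚ} (hx : x ∈ G) :
    (x.den : ℚ)⁻¹ ∈ G := by
  have hden : (x.den : ℚ) ≠ 0 := by positivity
  have key := G.gcd_zsmul_mem (x := (x.den : ℚ)⁻¹) (m := x.num) (k := x.den)
    (by rwa [zsmul_eq_mul, ← div_eq_mul_inv, Rat.num_div_den])
    (by rwa [zsmul_eq_mul, Int.cast_natCast, mul_inv_cancel₀ hden])
  rwa [Int.gcd, Int.natAbs_natCast, x.reduced, Nat.cast_one, one_zsmul] at key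

-- `b • (a * b)⁻¹ = a⁻¹`, `a • (a * b)⁻¹ = b⁻¹` and `gcd a b / (a * b) = 1 / lcm a b`.
theorem inv_lcm_mem (G : AddSubgroup ℚ) {a b : ℕ} (ha : (a : ℚ)⁻¹ ∈ G) (hb : (b : ℚ)⁻¹ ∈ G) :
    (Nat.lcm a b : ℚ)⁻¹ ∈ G := by
  obtain rfl | ha0 := eq_or_ne a 0
  · simp
  obtain rfl | hb0 := eq_or_ne b 0
  · simp
  have key := G.gcd_zsmul_mem (x := ((a : ℚ) * b)⁻¹) (m := b) (k := a)
    (by rwa [natCast_zsmul, nsmul_eq_mul, mul_inv, mul_left_comm, mul_inv_cancel₀ (by simpa),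
      mul_one])
    (by rwa [natCast_zsmul, nsmul_eq_mul, mul_inv, ← mul_assoc, mul_inv_cancel₀ (by simpa),
      one_mul])
  have hgl : (Nat.gcd a b : ℚ) * Nat.lcm a b = a * b := by exact_mod_cast Nat.gcd_mul_lcm a b
  rwa [Int.gcd_natCast_natCast, Nat.gcd_comm, natCast_zsmul, nsmul_eq_mul, ← hgl, mul_inv,
    ← mul_assoc, mul_inv_cancel₀ (by simp [ha0]), one_mul] at key

theorem inv_finset_lcm_mem {ι : Type*} (G : AddSubgroup ℚ) (h1 : (1 : ℚ) ∈ G) (s : Finset ι)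
    (f : ι → ℕ) (hf : ∀ i ∈ s, (f i : ℚ)⁻¹ ∈ G) : ((s.lcm f : ℕ) : ℚ)⁻¹ ∈ G := by
  classical
  induction s using Finset.induction_on with
  | empty => simpa using h1
  | insert i s _ ih =>
    rw [Finset.lcm_insert, lcm_eq_nat_lcm]
    exact G.inv_lcm_mem (hf i (mem_insert_self i s))
      (ih fun j hj => hf j (mem_insert_of_mem hj))

end AddSubgroup

theorem Rat.exists_eq_intCast_div_of_den_dvd {x : ℚ} {m : ℕ} (hdvd : x.den ∣ m) (hm : m ≠ 0) :
    ∃ p : ℤ, x = p / m := by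
  obtain ⟨c, rfl⟩ := hdvd
  refine ⟨x.num * c, ?_⟩
  rw [eq_div_iff (by exact_mod_cast hm), Int.cast_mul, ← Rat.mul_den_eq_num]
  push_cast
  ring

theorem exists_pnat_prod_range_eq (P : ℕ → ℕ) (h0 : P 0 = 1) (hdvd : ∀ k, P k ∣ P (k + 1))
    (hpos : ∀ k, 0 < P k) : ∃ n : ℕ → ℕ+, ∀ k, ∏ i ∈ range k, (n i : ℕ) = P k := by
  refine ⟨fun k => ⟨P (k + 1) / P k,
    Nat.div_pos (Nat.le_of_dvd (hpos _) (hdvd k)) (hpos k)⟩, fun k => ?_⟩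
  induction k with
  | zero => simp [h0]
  | succ k ih => rw [prod_range_succ, ih, PNat.mk_coe, Nat.mul_div_cancel' (hdvd k)]

/-- Every additive subgroup of ℚ containing 1 is of the form G(n) for some sequence
n : ℕ → ℕ+ of positive integers. -/
theorem subgroup_of_rat_eq_gset (G : AddSubgroup ℚ) (h1 : (1 : ℚ) ∈ G) :
    ∃ n : ℕ → ℕ+, (G : Set ℚ) = GSet n := by
  obtain ⟨g, hg⟩ := (G : Set ℚ).to_countable.exists_eq_range ⟨1, h1⟩
  set P : ℕ → ℕ := fun k => (range k).lcm fun i => (g i).den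
  have hpos : ∀ k, 0 < P k := fun k =>
    Nat.pos_of_ne_zero (by simp [P, Finset.lcm_eq_zero_iff])
  have hgG : ∀ i, g i ∈ G := fun i => by rw [← SetLike.mem_coe, hg]; exact Set.mem_range_self i
  have hinv : ∀ k, (P k : ℚ)⁻¹ ∈ G := fun k =>
    G.inv_finset_lcm_mem h1 _ _ fun i _ => G.inv_den_mem h1 (hgG i)
  obtain ⟨n, hn⟩ := exists_pnat_prod_range_eq P (by simp [P])
    (fun k => Finset.lcm_mono (by simp)) hpos
  refine ⟨n, Set.ext fun x => ⟨fun hx => ?_, ?_⟩⟩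
  · obtain ⟨k, rfl⟩ : x ∈ Set.range g := hg ▸ hx
    obtain ⟨p, hp⟩ := Rat.exists_eq_intCast_div_of_den_dvd
      (Finset.dvd_lcm (f := fun i => (g i).den) (self_mem_range_succ k)) (hpos (k + 1)).ne'
    exact ⟨p, k + 1, by rw [hp, ← Nat.cast_prod, hn]⟩
  · rintro ⟨p, k, rfl⟩
    rw [← Nat.cast_prod, hn, div_eq_mul_inv, ← zsmul_eq_mul]
    exact G.zsmul_mem (hinv k) p
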